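/- arXiv:2402.03864 — 3 statements merged into one kernel-verified Lean document; each statement's English description precedes it below -/
import Mathlib

section
/- (Continuous-time core of Theorem 4.1.) Let F : ℝ^p → ℝ^n be a differentiable map between Euclidean spaces, y ∈ ℝ^n, L(θ) = ½‖F(θ) − y‖², and let θ : ℝ → ℝ^p be differentiable with θ′(t) = −∇L(θ(t)) for every t. Let T > 0 and μ > 0, and suppose that for every t ∈ [0,T] and every v ∈ ℝ^n one has ⟨v, K(t)v⟩ ≥ μ‖v‖², where K(t) = J(θ(t))∘J(θ(t))*. Then for every t ∈ [0,T], ‖F(θ(t)) − y‖ ≤ e^{−μt}‖F(θ(0)) − y‖; equivalently L(θ(t)) ≤ e^{−2μt} L(θ(0)). -/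
/-!
Along the flow the residual `r = F ∘ θ - y` satisfies `r' = -J J* r = -K r`, so
`d/dt ‖r‖² = -2 ⟪r, K r⟫ ≤ -2μ ‖r‖²`, and Grönwall's inequality gives `‖r t‖² ≤ e^{-2μt} ‖r 0‖²`.
-/

open RealInnerProductSpace

theorem le_mul_exp_of_hasDerivAt_le_mul {f f' : ℝ → ℝ} {K a b : ℝ}
    (hf : ∀ x ∈ Set.Icc a b, HasDerivAt f (f' x) x)
    (bound : ∀ x ∈ Set.Ico a b, f' x ≤ K * f x) :
    ∀ x ∈ Set.Icc a b, f x ≤ f a * Real.exp (K * (x - a)) := by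
  intro x hx
  have := le_gronwallBound_of_liminf_deriv_right_le (δ := f a) (ε := 0)
    (fun x hx => (hf x hx).continuousAt.continuousWithinAt)
    (fun x hx _ hr =>
      (hf x (Set.Ico_subset_Icc_self hx)).hasDerivWithinAt.liminf_right_slope_le hr)
    le_rfl (by simpa only [add_zero] using bound) x hx
  rwa [gronwallBound_ε0] at this

section LeastSquares

variable {E G : Type*} [NormedAddCommGroup E] [InnerProductSpace ℝ E] [CompleteSpace E]
  [NormedAddCommGroup G] [InnerProductSpace ℝ G] [CompleteSpace G] {F : E → G} {y : G}

theorem hasGradientAt_half_norm_sub_sq {x : E} (hF : DifferentiableAt ℝ F x) :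
    HasGradientAt (fun x => (1 / 2 : ℝ) * ‖F x - y‖ ^ 2)
      (ContinuousLinearMap.adjoint (fderiv ℝ F x) (F x - y)) x := by
  rw [hasGradientAt_iff_hasFDerivAt]
  refine ((hF.hasFDerivAt.sub_const y).norm_sq.const_mul (1 / 2 : ℝ)).congr_fderiv ?_
  ext v
  simp only [one_div, map_sub, ContinuousLinearMap.sub_comp, two_smul, smul_add,
    add_apply, smul_apply, sub_apply,
    ContinuousLinearMap.comp_apply, coe_innerSL_apply, smul_eq_mul,
    InnerProductSpace.toDual_apply_apply, ContinuousLinearMap.adjoint_inner_left]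
  ring

theorem hasDerivAt_norm_sq_residual_of_gradient_flow {θ : ℝ → E} {t : ℝ}
    (hF : DifferentiableAt ℝ F (θ t))
    (hθ : HasDerivAt θ (-(gradient (fun x => (1 / 2 : ℝ) * ‖F x - y‖ ^ 2) (θ t))) t) :
    HasDerivAt (fun s => ‖F (θ s) - y‖ ^ 2)
      (-(2 * ⟪F (θ t) - y, ((fderiv ℝ F (θ t)).comp
        (ContinuousLinearMap.adjoint (fderiv ℝ F (θ t)))) (F (θ t) - y)⟫)) t := by
  rw [(hasGradientAt_half_norm_sub_sq hF).gradient] at hθ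
  refine ((hF.hasFDerivAt.comp_hasDerivAt t hθ).sub_const y).norm_sq.congr_deriv ?_
  rw [Function.comp_apply, ContinuousLinearMap.comp_apply, map_neg, inner_neg_right, mul_neg]

end LeastSquares

theorem gradient_flow_exponential_convergence_general {p n : ℕ}
    (F : EuclideanSpace ℝ (Fin p) → EuclideanSpace ℝ (Fin n))
    (hF : Differentiable ℝ F)
    (y : EuclideanSpace ℝ (Fin n))
    (θ : ℝ → EuclideanSpace ℝ (Fin p))
    (hθ : ∀ t : ℝ,
      HasDerivAt θ (-(gradient (fun ϑ => (1 / 2 : ℝ) * ‖F ϑ - y‖ ^ 2) (θ t))) t)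
    (T μ : ℝ)
    (hK : ∀ t ∈ Set.Icc (0 : ℝ) T, ∀ v : EuclideanSpace ℝ (Fin n),
      ⟪v, ((fderiv ℝ F (θ t)).comp
          (ContinuousLinearMap.adjoint (fderiv ℝ F (θ t)))) v⟫ ≥ μ * ‖v‖ ^ 2) :
    ∀ t ∈ Set.Icc (0 : ℝ) T,
      ‖F (θ t) - y‖ ≤ Real.exp (-μ * t) * ‖F (θ 0) - y‖ ∧
      (1 / 2 : ℝ) * ‖F (θ t) - y‖ ^ 2 ≤
        Real.exp (-(2 * μ) * t) * ((1 / 2 : ℝ) * ‖F (θ 0) - y‖ ^ 2) := by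
  intro t ht
  have hdecay : ‖F (θ t) - y‖ ^ 2 ≤ ‖F (θ 0) - y‖ ^ 2 * Real.exp (-(2 * μ) * t) := by
    simpa only [sub_zero] using le_mul_exp_of_hasDerivAt_le_mul (K := -(2 * μ))
      (fun s _ => hasDerivAt_norm_sq_residual_of_gradient_flow (hF (θ s)) (hθ s))
      (fun s hs => by nlinarith [hK s (Set.Ico_subset_Icc_self hs) (F (θ s) - y)]) t ht
  have hexp : Real.exp (-(2 * μ) * t) = Real.exp (-μ * t) ^ 2 := by
    rw [← Real.exp_nat_mul]
    ring_nf
  refine ⟨?_, by nlinarith⟩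
  rw [← pow_le_pow_iff_left₀ (norm_nonneg _) (by positivity) two_ne_zero]
  linarith [hexp ▸ hdecay]

/-- Continuous-time convergence of gradient flow for the least-squares loss under a
uniform lower bound `μ` on the tangent kernel `K(t) = J(t) ∘ J(t)*` along the
trajectory: `‖F(θ(t)) − y‖ ≤ e^{−μt}‖F(θ(0)) − y‖`, equivalently
`L(θ(t)) ≤ e^{−2μt} L(θ(0))`. -/
theorem gradient_flow_exponential_convergence {p n : ℕ}
    (F : EuclideanSpace ℝ (Fin p) → EuclideanSpace ℝ (Fin n))
    (hF : Differentiable ℝ F)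
    (y : EuclideanSpace ℝ (Fin n))
    (θ : ℝ → EuclideanSpace ℝ (Fin p))
    (hθ : ∀ t : ℝ,
      HasDerivAt θ (-(gradient (fun ϑ => (1 / 2 : ℝ) * ‖F ϑ - y‖ ^ 2) (θ t))) t)
    (T μ : ℝ) (hT : 0 < T) (hμ : 0 < μ)
    (hK : ∀ t ∈ Set.Icc (0 : ℝ) T, ∀ v : EuclideanSpace ℝ (Fin n),
      ⟪v, ((fderiv ℝ F (θ t)).comp
          (ContinuousLinearMap.adjoint (fderiv ℝ F (θ t)))) v⟫ ≥ μ * ‖v‖ ^ 2) :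
    ∀ t ∈ Set.Icc (0 : ℝ) T,
      ‖F (θ t) - y‖ ≤ Real.exp (-μ * t) * ‖F (θ 0) - y‖ ∧
      (1 / 2 : ℝ) * ‖F (θ t) - y‖ ^ 2 ≤
        Real.exp (-(2 * μ) * t) * ((1 / 2 : ℝ) * ‖F (θ 0) - y‖ ^ 2) :=
  gradient_flow_exponential_convergence_general F hF y θ hθ T μ hK
end

section
/- (Full-rank Gauss–Newton flow, convergence part of Theorem 4.2.) Let F : ℝ^p → ℝ^n be a differentiable map between Euclidean spaces, y ∈ ℝ^n, and θ : ℝ → ℝ^p differentiable. For each t write J(t) for the Fréchet derivative of F at θ(t) and J(t)* for its adjoint. Suppose that for every t ∈ ℝ there is a linear map G(t) : ℝ^n → ℝ^n with G(t)∘(J(t)∘J(t)*) = id = (J(t)∘J(t)*)∘G(t) (i.e. J(t)J(t)* is invertible, equivalently J(t) is surjective), and that θ′(t) = −J(t)*(G(t)(F(θ(t)) − y)) for all t (the Gauss–Newton flow θ′ = −(JᵀJ)^†∇L in the full-rank case). Then F(θ(t)) − y = e^{−t}·(F(θ(0)) − y) for all t ≥ 0; in particular the loss L(θ(t)) = ½‖F(θ(t))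 − y‖² equals e^{−2t}L(θ(0)) and tends to 0, so convergence to a global minimum is attained. -/
/-!
Along the flow the residual `r = F ∘ θ - y` satisfies `r' = J θ' = -(J J*) G r = -r`, because
`G` is a right inverse of `J J*`. Hence `eᵗ r(t)` has zero derivative, so `r(t) = e^{-t} r(0)`,
and the loss `½‖r‖²` picks up the factor `e^{-2t}`.
-/

open ContinuousLinearMap

theorem eq_exp_neg_smul_of_hasDerivAt_neg {E : Type*} [NormedAddCommGroup E] [NormedSpace ℝ E]
    {r : ℝ → E} (hr : ∀ t, HasDerivAt r (-r t) t) (t : ℝ) :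
    r t = Real.exp (-t) • r 0 := by
  have hconst : ∀ s, HasDerivAt (fun s => Real.exp s • r s) 0 s := fun s =>
    ((Real.hasDerivAt_exp s).smul (hr s)).congr_deriv (by simp [smul_neg])
  have h : Real.exp t • r t = r 0 := by
    simpa using is_const_of_deriv_eq_zero (fun s => (hconst s).differentiableAt)
      (fun s => (hconst s).deriv) t 0
  rw [← h, smul_smul, ← Real.exp_add, neg_add_cancel, Real.exp_zero, one_smul]

theorem hasDerivAt_comp_sub_of_comp_rightInverse
    {E F : Type*} [NormedAddCommGroup E] [NormedSpace ℝ E] [NormedAddCommGroup F] [NormedSpace ℝ F]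
    {f : E → F} {J : E →L[ℝ] F} {A : F →L[ℝ] E} {θ : ℝ → E} {t : ℝ} (y : F)
    (hf : HasFDerivAt f J (θ t)) (hJA : J.comp A = ContinuousLinearMap.id ℝ F)
    (hθ : HasDerivAt θ (-A (f (θ t) - y)) t) :
    HasDerivAt (fun s => f (θ s) - y) (-(f (θ t) - y)) t := by
  have hJA_apply : J (A (f (θ t) - y)) = f (θ t) - y := by
    simpa using DFunLike.congr_fun hJA (f (θ t) - y)
  have h := (hf.comp_hasDerivAt t hθ).sub_const y
  rwa [map_neg, hJA_apply] at h

theorem gaussNewton_flow_fullRank_convergence_general {p n : ℕ}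
    (F : EuclideanSpace ℝ (Fin p) → EuclideanSpace ℝ (Fin n))
    (hF : Differentiable ℝ F)
    (y : EuclideanSpace ℝ (Fin n))
    (θ : ℝ → EuclideanSpace ℝ (Fin p))
    (hflow : ∀ t : ℝ,
      ∃ G : EuclideanSpace ℝ (Fin n) →L[ℝ] EuclideanSpace ℝ (Fin n),
        G.comp ((fderiv ℝ F (θ t)).comp
          (ContinuousLinearMap.adjoint (fderiv ℝ F (θ t)))) = ContinuousLinearMap.id ℝ _ ∧
        ((fderiv ℝ F (θ t)).comp
          (ContinuousLinearMap.adjoint (fderiv ℝ F (θ t)))).comp G = ContinuousLinearMap.id ℝ _ ∧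
        HasDerivAt θ
          (-(ContinuousLinearMap.adjoint (fderiv ℝ F (θ t)) (G (F (θ t) - y)))) t) :
    ∀ t : ℝ, 0 ≤ t →
      F (θ t) - y = Real.exp (-t) • (F (θ 0) - y) ∧
      (1 / 2 : ℝ) * ‖F (θ t) - y‖ ^ 2 =
        Real.exp (-(2 * t)) * ((1 / 2 : ℝ) * ‖F (θ 0) - y‖ ^ 2) := by
  have hresidual : ∀ t, HasDerivAt (fun s => F (θ s) - y) (-(F (θ t) - y)) t := fun t => by
    obtain ⟨G, -, hG, hθ⟩ := hflow t
    exact hasDerivAt_comp_sub_of_comp_rightInverse (A := (adjoint (fderiv ℝ F (θ t))).comp G) y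
      (hF (θ t)).hasFDerivAt (by rw [← comp_assoc, hG]) hθ
  intro t _
  have hr := eq_exp_neg_smul_of_hasDerivAt_neg hresidual t
  refine ⟨hr, ?_⟩
  have hexp : Real.exp (-(2 * t)) = Real.exp (-t) ^ 2 := by
    rw [← Real.exp_nat_mul]; ring_nf
  rw [hr, norm_smul, Real.norm_of_nonneg (Real.exp_pos _).le, hexp]
  ring

/-- Full-rank Gauss–Newton flow: if `J(t)J(t)*` is invertible for all `t` and
`θ′(t) = −J(t)* (J(t)J(t)*)⁻¹ (F(θ(t)) − y)`, then the residual decays exactly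
exponentially, `F(θ(t)) − y = e^{−t}(F(θ(0)) − y)`, and the loss tends to `0`. -/
theorem gaussNewton_flow_fullRank_convergence {p n : ℕ}
    (F : EuclideanSpace ℝ (Fin p) → EuclideanSpace ℝ (Fin n))
    (hF : Differentiable ℝ F)
    (y : EuclideanSpace ℝ (Fin n))
    (θ : ℝ → EuclideanSpace ℝ (Fin p))
    (hθ : Differentiable ℝ θ)
    (hflow : ∀ t : ℝ,
      ∃ G : EuclideanSpace ℝ (Fin n) →L[ℝ] EuclideanSpace ℝ (Fin n),
        G.comp ((fderiv ℝ F (θ t)).comp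
          (ContinuousLinearMap.adjoint (fderiv ℝ F (θ t)))) = ContinuousLinearMap.id ℝ _ ∧
        ((fderiv ℝ F (θ t)).comp
          (ContinuousLinearMap.adjoint (fderiv ℝ F (θ t)))).comp G = ContinuousLinearMap.id ℝ _ ∧
        HasDerivAt θ
          (-(ContinuousLinearMap.adjoint (fderiv ℝ F (θ t)) (G (F (θ t) - y)))) t) :
    ∀ t : ℝ, 0 ≤ t →
      F (θ t) - y = Real.exp (-t) • (F (θ 0) - y) ∧
      (1 / 2 : ℝ) * ‖F (θ t) - y‖ ^ 2 =
        Real.exp (-(2 * t)) * ((1 / 2 : ℝ) * ‖F (θ 0) - y‖ ^ 2) :=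
  gaussNewton_flow_fullRank_convergence_general F hF y θ hflow
end

section
/- (Hessian of the network output is O(1/√m).) Fix d ≥ 1, C > 0, and a twice continuously differentiable σ : ℝ → ℝ with |σ′(y)| ≤ C and |σ″(y)| ≤ C for all y ∈ ℝ. Then there exists a constant K > 0, depending only on C and d (and not on m), with the following property: for every m ≥ 1, every x ∈ ℝ^d with ‖x‖ ≤ 1, and every parameter vector θ = (W¹, W⁰, b⁰, b¹) ∈ ℝ^m × (ℝ^d)^m × ℝ^m × ℝ all of whose entries are bounded in absolute value by C, the second Fréchet derivative at θ of the map θ ↦ u_θ(x) = (1/√m) Σ_{j=1}^m W¹_j σ(⟨W⁰_j, x⟩ + b⁰_j) + b¹, computed with respect to the Euclidean (ℓ²) norm on the concatenation of all m(d+2)+1 parameters, has norm at most K/√m. -/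
/-!
Write the network as `θ ↦ c ∑ⱼ aⱼ(θ) σ(lⱼ(θ)) + b¹` with `c = 1/√m` and the linear functionals
`aⱼ(θ) = W¹ⱼ`, `lⱼ(θ) = ⟨W⁰ⱼ, x⟩ + b⁰ⱼ`. Its Hessian is the bilinear form
`c ∑ⱼ [aⱼ(θ) σ''(lⱼ θ) lⱼ ⊗ lⱼ + σ'(lⱼ θ) (aⱼ ⊗ lⱼ + lⱼ ⊗ aⱼ)]`.
Cauchy–Schwarz over `j` bounds it by `C (C ‖L‖² + 2 ‖A‖ ‖L‖) ‖u‖ ‖v‖`, where `A θ = (aⱼ θ)ⱼ` and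
`L θ = (lⱼ θ)ⱼ` are maps into `ℓ²(m)` of operator norm at most `1` and `2` (the neurons read
disjoint blocks of `θ`), so only `c` depends on `m`.
-/

open Finset EuclideanSpace

section Neuron

variable {E : Type*} [NormedAddCommGroup E] [NormedSpace ℝ E] (σ : ℝ → ℝ) (a l : E →L[ℝ] ℝ)

noncomputable def neuronGrad (ϑ : E) : E →L[ℝ] ℝ :=
  a ϑ • deriv σ (l ϑ) • l + σ (l ϑ) • a

noncomputable def neuronHess (θ : E) : E →L[ℝ] E →L[ℝ] ℝ :=
  (a θ * deriv (deriv σ) (l θ)) • l.smulRight l + deriv σ (l θ) • (a.smulRight l + l.smulRight a)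

variable {σ}

theorem neuronHess_apply (θ u v : E) :
    neuronHess σ a l θ u v =
      a θ * deriv (deriv σ) (l θ) * l u * l v + deriv σ (l θ) * (a u * l v + l u * a v) := by
  simp only [neuronHess, add_apply, smul_apply, ContinuousLinearMap.smulRight_apply, smul_eq_mul]
  ring

theorem hasFDerivAt_neuron (hσ : Differentiable ℝ σ) (ϑ : E) :
    HasFDerivAt (fun ϑ => a ϑ * σ (l ϑ)) (neuronGrad σ a l ϑ) ϑ :=
  a.hasFDerivAt.fun_mul ((hσ (l ϑ)).hasDerivAt.comp_hasFDerivAt ϑ l.hasFDerivAt)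

theorem hasFDerivAt_neuronGrad (hσ : Differentiable ℝ σ) (hσ' : Differentiable ℝ (deriv σ))
    (θ : E) : HasFDerivAt (neuronGrad σ a l) (neuronHess σ a l θ) θ := by
  have hl := l.hasFDerivAt (x := θ)
  refine ((a.hasFDerivAt.fun_smul
    (((hσ' (l θ)).hasDerivAt.comp_hasFDerivAt θ hl).smul_const l)).add
    (((hσ (l θ)).hasDerivAt.comp_hasFDerivAt θ hl).smul_const a)).congr_fderiv ?_
  ext u v
  simp only [neuronHess_apply, Function.comp_apply, add_apply, smul_apply,
    ContinuousLinearMap.smulRight_apply, smul_eq_mul]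
  ring

end Neuron

section Network

variable {E ι : Type*} [NormedAddCommGroup E] [NormedSpace ℝ E] [Fintype ι] {σ : ℝ → ℝ}

theorem fderiv_fderiv_network (hσ : Differentiable ℝ σ) (hσ' : Differentiable ℝ (deriv σ))
    (c : ℝ) (a l : ι → E →L[ℝ] ℝ) (D : E →L[ℝ] ℝ) (θ : E) :
    fderiv ℝ (fderiv ℝ fun ϑ => c * ∑ j, a j ϑ * σ (l j ϑ) + D ϑ) θ =
      c • ∑ j, neuronHess σ (a j) (l j) θ := by
  have hgrad : fderiv ℝ (fun ϑ => c * ∑ j, a j ϑ * σ (l j ϑ) + D ϑ) =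
      fun ϑ => c • ∑ j, neuronGrad σ (a j) (l j) ϑ + D := funext fun ϑ =>
    (((HasFDerivAt.fun_sum fun j _ => hasFDerivAt_neuron (a j) (l j) hσ ϑ).const_mul c).add
      D.hasFDerivAt).fderiv
  rw [hgrad]
  exact (((HasFDerivAt.fun_sum fun j _ =>
    hasFDerivAt_neuronGrad (a j) (l j) hσ hσ' θ).const_smul c).add_const D).fderiv

theorem sum_abs_mul_abs_le_norm_mul_norm (p q : EuclideanSpace ℝ ι) :
    ∑ j, |p j| * |q j| ≤ ‖p‖ * ‖q‖ := by
  simpa [EuclideanSpace.norm_eq] using Real.sum_mul_le_sqrt_mul_sqrt univ (|p ·|) (|q ·|)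

theorem norm_sum_neuronHess_le {C : ℝ} (hσ' : ∀ y, |deriv σ y| ≤ C)
    (hσ'' : ∀ y, |deriv (deriv σ) y| ≤ C) (A L : E →L[ℝ] EuclideanSpace ℝ ι) {θ : E}
    (hθ : ∀ j, |A θ j| ≤ C) :
    ‖∑ j, neuronHess σ (proj j ∘L A) (proj j ∘L L) θ‖ ≤
      C * (C * ‖L‖ ^ 2 + 2 * ‖A‖ * ‖L‖) := by
  have hC : 0 ≤ C := (abs_nonneg _).trans (hσ' 0)
  refine ContinuousLinearMap.opNorm_le_bound _ (by positivity) fun u =>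
    ContinuousLinearMap.opNorm_le_bound _ (by positivity) fun v => ?_
  have hterm : ∀ j, |neuronHess σ (proj j ∘L A) (proj j ∘L L) θ u v| ≤
      C * (C * (|L u j| * |L v j|) + (|A u j| * |L v j| + |L u j| * |A v j|)) := by
    intro j
    simp only [neuronHess_apply, ContinuousLinearMap.comp_apply, EuclideanSpace.coe_proj]
    calc _ ≤ |A θ j| * |deriv (deriv σ) (L θ j)| * (|L u j| * |L v j|) +
          |deriv σ (L θ j)| * (|A u j| * |L v j| + |L u j| * |A v j|) := by
          refine (abs_add_le _ _).trans
            (add_le_add (by rw [abs_mul, abs_mul, abs_mul, mul_assoc]) ?_)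
          rw [abs_mul]
          gcongr
          exact (abs_add_le _ _).trans_eq (by rw [abs_mul, abs_mul])
        _ ≤ C * C * (|L u j| * |L v j|) + C * (|A u j| * |L v j| + |L u j| * |A v j|) := by
          gcongr
          exacts [hθ j, hσ'' _, hσ' _]
        _ = _ := by ring
  calc ‖(∑ j, neuronHess σ (proj j ∘L A) (proj j ∘L L) θ) u v‖
      ≤ ∑ j, C * (C * (|L u j| * |L v j|) + (|A u j| * |L v j| + |L u j| * |A v j|)) := by
        simp only [_root_.sum_apply, Real.norm_eq_abs]
        exact (abs_sum_le_sum_abs _ _).trans (sum_le_sum fun j _ => hterm j)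
    _ ≤ C * (C * (‖L u‖ * ‖L v‖) + (‖A u‖ * ‖L v‖ + ‖L u‖ * ‖A v‖)) := by
        simp only [← mul_sum, sum_add_distrib]
        gcongr <;> exact sum_abs_mul_abs_le_norm_mul_norm _ _
    _ ≤ C * (C * (‖L‖ * ‖u‖ * (‖L‖ * ‖v‖)) +
          (‖A‖ * ‖u‖ * (‖L‖ * ‖v‖) + ‖L‖ * ‖u‖ * (‖A‖ * ‖v‖))) := by
        gcongr <;> exact ContinuousLinearMap.le_opNorm _ _
    _ = C * (C * ‖L‖ ^ 2 + 2 * ‖A‖ * ‖L‖) * ‖u‖ * ‖v‖ := by ring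

end Network

section EuclideanMaps

variable {ι κ : Type*}

noncomputable def euclideanRestrict (g : κ → ι) : EuclideanSpace ℝ ι →L[ℝ] EuclideanSpace ℝ κ :=
  (EuclideanSpace.equiv κ ℝ).symm.toContinuousLinearMap ∘L
    ContinuousLinearMap.pi fun k => proj (g k)

theorem norm_euclideanRestrict_le [Fintype ι] [Fintype κ] {g : κ → ι} (hg : g.Injective) :
    ‖euclideanRestrict g‖ ≤ 1 := by
  refine ContinuousLinearMap.opNorm_le_bound _ zero_le_one fun u => ?_
  rw [one_mul, ← sq_le_sq₀ (norm_nonneg _) (norm_nonneg _), EuclideanSpace.real_norm_sq_eq,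
    EuclideanSpace.real_norm_sq_eq]
  calc ∑ k, (u (g k)) ^ 2 = ∑ i ∈ univ.map ⟨g, hg⟩, u i ^ 2 :=
        (sum_map univ ⟨g, hg⟩ fun i => u i ^ 2).symm
    _ ≤ ∑ i, u i ^ 2 := sum_le_univ_sum_of_nonneg fun i => sq_nonneg _

-- Built by hand, not as a sum of maps, so that `euclideanMulVec x w j` unfolds definitionally
-- to the sum over `k`: the main theorem matches the network's formula against it by `rfl`.
noncomputable def euclideanMulVec [Fintype ι] [Fintype κ] (x : EuclideanSpace ℝ κ) :
    EuclideanSpace ℝ (ι × κ) →L[ℝ] EuclideanSpace ℝ ι :=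
  LinearMap.toContinuousLinearMap
    { toFun w := WithLp.toLp 2 fun j => ∑ k, w (j, k) * x k
      map_add' w w' := by ext j; simp [add_mul, sum_add_distrib]
      map_smul' c w := by ext j; simp [mul_sum, mul_assoc] }

theorem euclideanMulVec_apply [Fintype ι] [Fintype κ] (x : EuclideanSpace ℝ κ)
    (w : EuclideanSpace ℝ (ι × κ)) (j : ι) : euclideanMulVec x w j = ∑ k, w (j, k) * x k := rfl

theorem norm_euclideanMulVec_le [Fintype ι] [Fintype κ] (x : EuclideanSpace ℝ κ) :
    ‖euclideanMulVec (ι := ι) x‖ ≤ ‖x‖ := by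
  refine ContinuousLinearMap.opNorm_le_bound _ (norm_nonneg _) fun w => ?_
  rw [← sq_le_sq₀ (norm_nonneg _) (by positivity), mul_pow, EuclideanSpace.real_norm_sq_eq,
    EuclideanSpace.real_norm_sq_eq, EuclideanSpace.real_norm_sq_eq, Fintype.sum_prod_type, mul_sum]
  refine sum_le_sum fun j _ => ?_
  rw [euclideanMulVec_apply, mul_comm]
  exact sum_mul_sq_le_sq_mul_sq _ _ _

end EuclideanMaps

section OneHiddenLayer

variable {m d : ℕ}

-- coordinates of `θ = (W¹, W⁰, b⁰, b¹)`
abbrev ParamIndex (m d : ℕ) := Fin m ⊕ (Fin m × Fin d) ⊕ Fin m ⊕ Unit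

noncomputable def outerWeights :
    EuclideanSpace ℝ (ParamIndex m d) →L[ℝ] EuclideanSpace ℝ (Fin m) :=
  euclideanRestrict Sum.inl

noncomputable def preactivation (x : EuclideanSpace ℝ (Fin d)) :
    EuclideanSpace ℝ (ParamIndex m d) →L[ℝ] EuclideanSpace ℝ (Fin m) :=
  euclideanMulVec x ∘L euclideanRestrict (Sum.inr ∘ Sum.inl) +
    euclideanRestrict (Sum.inr ∘ Sum.inr ∘ Sum.inl)

theorem norm_outerWeights_le :
    ‖(outerWeights : EuclideanSpace ℝ (ParamIndex m d) →L[ℝ] _)‖ ≤ 1 :=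
  norm_euclideanRestrict_le Sum.inl_injective

theorem norm_preactivation_le {x : EuclideanSpace ℝ (Fin d)} (hx : ‖x‖ ≤ 1) :
    ‖(preactivation x : EuclideanSpace ℝ (ParamIndex m d) →L[ℝ] _)‖ ≤ 2 := by
  refine (norm_add_le _ _).trans
    ((add_le_add_left (ContinuousLinearMap.opNorm_comp_le _ _) _).trans ?_)
  have hW := (norm_euclideanMulVec_le (ι := Fin m) x).trans hx
  have hR₁ := norm_euclideanRestrict_le (ι := ParamIndex m d)
    (Sum.inr_injective.comp Sum.inl_injective)
  have hR₂ := norm_euclideanRestrict_le (ι := ParamIndex m d)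
    (Sum.inr_injective.comp (Sum.inr_injective.comp Sum.inl_injective))
  nlinarith [norm_nonneg (euclideanMulVec (ι := Fin m) x)]

end OneHiddenLayer

theorem network_hessian_bound_general (d : ℕ) (C : ℝ) (hC : 0 < C)
    (σ : ℝ → ℝ) (hσ : ContDiff ℝ 2 σ)
    (hσ' : ∀ y : ℝ, |deriv σ y| ≤ C)
    (hσ'' : ∀ y : ℝ, |deriv (deriv σ) y| ≤ C) :
    ∃ K : ℝ, 0 < K ∧ ∀ m : ℕ, 1 ≤ m →
      ∀ x : EuclideanSpace ℝ (Fin d), ‖x‖ ≤ 1 →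
      ∀ θ : EuclideanSpace ℝ (Fin m ⊕ (Fin m × Fin d) ⊕ Fin m ⊕ Unit),
        (∀ idx, |θ idx| ≤ C) →
        ‖fderiv ℝ (fderiv ℝ
            (fun ϑ : EuclideanSpace ℝ (Fin m ⊕ (Fin m × Fin d) ⊕ Fin m ⊕ Unit) =>
              (1 / Real.sqrt m) *
                (∑ j : Fin m, ϑ (Sum.inl j) *
                  σ ((∑ i : Fin d, ϑ (Sum.inr (Sum.inl (j, i))) * x i) +
                    ϑ (Sum.inr (Sum.inr (Sum.inl j))))) +
                ϑ (Sum.inr (Sum.inr (Sum.inr ()))))) θ‖ ≤ K / Real.sqrt m := by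
  refine ⟨C * (4 * C + 4), by positivity, fun m _ x hx θ hθ => ?_⟩
  let A : EuclideanSpace ℝ (ParamIndex m d) →L[ℝ] _ := outerWeights
  let L : EuclideanSpace ℝ (ParamIndex m d) →L[ℝ] _ := preactivation x
  let H := ∑ j, neuronHess σ (proj j ∘L A) (proj j ∘L L) θ
  have hH : ‖H‖ ≤ C * (C * 2 ^ 2 + 2 * 1 * 2) := by
    refine (norm_sum_neuronHess_le hσ' hσ'' A L fun _ => hθ _).trans ?_
    gcongr
    exacts [norm_preactivation_le hx, norm_outerWeights_le, norm_preactivation_le hx]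
  calc _ = ‖(1 / Real.sqrt m) • H‖ :=
        congrArg norm (fderiv_fderiv_network (hσ.differentiable two_ne_zero)
          ((hσ.deriv' (n := 1)).differentiable one_ne_zero) (1 / Real.sqrt m)
          (fun j => proj j ∘L A) (fun j => proj j ∘L L) (proj (Sum.inr (Sum.inr (Sum.inr ())))) θ)
    _ ≤ 1 / Real.sqrt m * ‖H‖ := by
        refine (ContinuousLinearMap.opNorm_smul_le _ _).trans_eq ?_
        rw [Real.norm_of_nonneg (by positivity)]
    _ ≤ 1 / Real.sqrt m * (C * (C * 2 ^ 2 + 2 * 1 * 2)) := by gcongr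
    _ = C * (4 * C + 4) / Real.sqrt m := by ring

/-- The second Fréchet derivative (with respect to all parameters, in the Euclidean
norm) of the one-hidden-layer network output `θ ↦ u_θ(x)` is `O(1/√m)`, uniformly
over bounded parameters and `‖x‖ ≤ 1`, with a constant depending only on `C` and `d`. -/
theorem network_hessian_bound (d : ℕ) (hd : 1 ≤ d) (C : ℝ) (hC : 0 < C)
    (σ : ℝ → ℝ) (hσ : ContDiff ℝ 2 σ)
    (hσ' : ∀ y : ℝ, |deriv σ y| ≤ C)
    (hσ'' : ∀ y : ℝ, |deriv (deriv σ) y| ≤ C) :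
    ∃ K : ℝ, 0 < K ∧ ∀ m : ℕ, 1 ≤ m →
      ∀ x : EuclideanSpace ℝ (Fin d), ‖x‖ ≤ 1 →
      ∀ θ : EuclideanSpace ℝ (Fin m ⊕ (Fin m × Fin d) ⊕ Fin m ⊕ Unit),
        (∀ idx, |θ idx| ≤ C) →
        ‖fderiv ℝ (fderiv ℝ
            (fun ϑ : EuclideanSpace ℝ (Fin m ⊕ (Fin m × Fin d) ⊕ Fin m ⊕ Unit) =>
              (1 / Real.sqrt m) *
                (∑ j : Fin m, ϑ (Sum.inl j) *
                  σ ((∑ i : Fin d, ϑ (Sum.inr (Sum.inl (j, i))) * x i) +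
                    ϑ (Sum.inr (Sum.inr (Sum.inl j))))) +
                ϑ (Sum.inr (Sum.inr (Sum.inr ()))))) θ‖ ≤ K / Real.sqrt m :=
  network_hessian_bound_general d C hC σ hσ hσ' hσ''
end
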